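/- Assume in addition that ε(∑_{j=1}^n b_jξ_j) < 1 + (∑_{j=1}^n a_j)²(∑_{j=1}^n ξ_j²η_j). Then there exists λ' ∈ (0, δ_ε] such that for every λ ∈ (0, λ'], every eigenvalue of the Jacobian matrix A_ε(λ) (that is, A_β(λ) with β = ε) has strictly negative real part. -/

import Mathlib

/-!
As `λ → 0` the Jacobian `A_ε(λ)` tends to the block-diagonal matrix `diag(P, θQ)`. By Gershgorin's
theorem on columns its nonzero eigenvalues lie in the open left half-plane, and by irreducibility
its zero eigenvalue is semisimple of multiplicity two: the kernel is spanned by `(ξ, 0)`, `(0, η)`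
and the left kernel by the two block sums. Eigenvalues of `A_ε(λ)` approaching `0` are therefore
`λσ + o(λ)`, with `σ` an eigenvalue of the reduced matrix `[[εB - 1, c₀²S], [-εB, -c₀²S]]`
(`B = ∑ bⱼξⱼ`, `S = ∑ ξⱼ²ηⱼ`), whose trace is negative by the smallness condition and whose
determinant `c₀²S` is positive.
-/

open Finset Set

/-- A real square matrix is essentially nonnegative if all off-diagonal entries
are nonnegative. -/
def EssNonneg {n : ℕ} (P : Matrix (Fin n) (Fin n) ℝ) : Prop :=
  ∀ j k, j ≠ k → 0 ≤ P j k

/-- Zero column sums. -/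
def ZeroColSums {n : ℕ} (P : Matrix (Fin n) (Fin n) ℝ) : Prop :=
  ∀ k, ∑ j, P j k = 0

/-- Irreducibility of a matrix. -/
def MatIrred {n : ℕ} (P : Matrix (Fin n) (Fin n) ℝ) : Prop :=
  ∀ S : Finset (Fin n), S.Nonempty → S ≠ Finset.univ →
    ∃ j, j ∉ S ∧ ∃ k ∈ S, P j k ≠ 0

/-- Componentwise positivity of a vector. -/
def PosVec {n : ℕ} (x : Fin n → ℝ) : Prop := ∀ j, 0 < x j

/-- The equilibrium system (E). -/
def IsEquilib {n : ℕ} (P Q : Matrix (Fin n) (Fin n) ℝ) (a b : Fin n → ℝ)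
    (θ lam β : ℝ) (x y : Fin n → ℝ) : Prop :=
  ∀ j, (∑ k, P j k * x k) + lam * (a j - (β * b j + 1) * x j + (x j) ^ 2 * y j) = 0 ∧
    θ * (∑ k, Q j k * y k) + lam * (β * b j * x j - (x j) ^ 2 * y j) = 0

/-- The linearization matrix `A_β(λ)` (as a complex `2n × 2n` matrix in block form). -/
noncomputable def Amat {n : ℕ} (P Q : Matrix (Fin n) (Fin n) ℝ) (b : Fin n → ℝ)
    (θ lam β : ℝ) (x y : Fin n → ℝ) :
    Matrix (Fin n ⊕ Fin n) (Fin n ⊕ Fin n) ℂ :=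
  Matrix.fromBlocks (P.map fun t => (t : ℂ)) 0 0 ((θ : ℂ) • Q.map fun t => (t : ℂ))
    + (lam : ℂ) • Matrix.fromBlocks
        (Matrix.diagonal fun j => ((2 * x j * y j - β * b j - 1 : ℝ) : ℂ))
        (Matrix.diagonal fun j => (((x j) ^ 2 : ℝ) : ℂ))
        (Matrix.diagonal fun j => ((β * b j - 2 * x j * y j : ℝ) : ℂ))
        (-(Matrix.diagonal fun j => (((x j) ^ 2 : ℝ) : ℂ)))

/-- `μ` is an eigenvalue of the complex matrix `A`. -/
def IsEig {m : Type*} [Fintype m] (A : Matrix m m ℂ) (μ : ℂ) : Prop :=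
  ∃ v, v ≠ 0 ∧ A.mulVec v = μ • v

open Filter Topology Matrix

theorem exists_tendsto_of_smul_eq {α κ 𝕜 : Type*} [NormedField 𝕜] {l : Filter α} [l.NeBot]
    {σ : α → 𝕜} {a b : α → κ → 𝕜} {a₀ b₀ : κ → 𝕜} (ha : Tendsto a l (𝓝 a₀))
    (hb : Tendsto b l (𝓝 b₀)) (ha₀ : a₀ ≠ 0) (hσ : ∀ x, σ x • a x = b x) :
    ∃ σ₀, Tendsto σ l (𝓝 σ₀) ∧ σ₀ • a₀ = b₀ := by
  obtain ⟨k, hk⟩ : ∃ k, a₀ k ≠ 0 := Function.ne_iff.mp ha₀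
  have hak := tendsto_pi_nhds.mp ha k
  have hσk : Tendsto σ l (𝓝 (b₀ k / a₀ k)) := by
    refine ((tendsto_pi_nhds.mp hb k).div hak hk).congr' ?_
    filter_upwards [hak.eventually_ne hk] with x hx
    rw [Pi.div_apply, ← hσ x, Pi.smul_apply, smul_eq_mul, mul_div_cancel_right₀ _ hx]
  exact ⟨_, hσk, tendsto_nhds_unique (hσk.smul ha) (hb.congr fun x => (hσ x).symm)⟩

section Perturbation

variable {ι κ : Type*} [Fintype ι]

theorem IsEig.exists_norm_eq_one {A : Matrix ι ι ℂ} {μ : ℂ} (h : IsEig A μ) :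
    ∃ v, ‖v‖ = 1 ∧ A *ᵥ v = μ • v := by
  obtain ⟨v, hv, hAv⟩ := h
  refine ⟨(‖v‖⁻¹ : ℂ) • v, ?_, ?_⟩
  · rw [norm_smul, norm_inv, Complex.norm_real, norm_norm,
      inv_mul_cancel₀ (norm_ne_zero_iff.mpr hv)]
  · rw [mulVec_smul, hAv, smul_comm]

theorem exists_subseq_tendsto_eigenpair {A : ℕ → Matrix ι ι ℂ} {A₀ : Matrix ι ι ℂ}
    (hA : Tendsto A atTop (𝓝 A₀)) {μ : ℕ → ℂ} {V : ℕ → ι → ℂ} (hV : ∀ m, ‖V m‖ = 1)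
    (hAV : ∀ m, A m *ᵥ V m = μ m • V m) :
    ∃ φ : ℕ → ℕ, StrictMono φ ∧ ∃ v₀ μ₀, ‖v₀‖ = 1 ∧ Tendsto (V ∘ φ) atTop (𝓝 v₀) ∧
      Tendsto (μ ∘ φ) atTop (𝓝 μ₀) ∧ A₀ *ᵥ v₀ = μ₀ • v₀ := by
  have hsphere : ∀ m, V m ∈ Metric.sphere (0 : ι → ℂ) 1 := fun m => by
    rw [mem_sphere_zero_iff_norm]; exact hV m
  obtain ⟨v₀, hv₀, φ, hφ, hVφ⟩ := (isCompact_sphere (0 : ι → ℂ) 1).tendsto_subseq hsphere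
  rw [mem_sphere_zero_iff_norm] at hv₀
  have hmulVec : Continuous fun p : Matrix ι ι ℂ × (ι → ℂ) => p.1 *ᵥ p.2 := by fun_prop
  have hAVφ := (hmulVec.tendsto (A₀, v₀)).comp ((hA.comp hφ.tendsto_atTop).prodMk_nhds hVφ)
  obtain ⟨μ₀, hμ, hμ₀⟩ := exists_tendsto_of_smul_eq hVφ hAVφ (norm_ne_zero_iff.mp (by simp [hv₀]))
    fun m => (hAV (φ m)).symm
  exact ⟨φ, hφ, v₀, μ₀, hv₀, hVφ, hμ, hμ₀.symm⟩

theorem div_smul_mulVec_eq_of_mul_eq_zero {A₀ M : Matrix ι ι ℂ} {W : Matrix κ ι ℂ}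
    (hWA : W * A₀ = 0) {t μ : ℂ} (ht : t ≠ 0) {v : ι → ℂ} (hv : (A₀ + t • M) *ᵥ v = μ • v) :
    (μ / t) • (W *ᵥ v) = (W * M) *ᵥ v := by
  have h : t • ((W * M) *ᵥ v) = μ • (W *ᵥ v) := by
    have h := congrArg (W *ᵥ ·) hv
    simp only [mulVec_mulVec, Matrix.mul_add, hWA, zero_add, Matrix.mul_smul, mulVec_smul] at h
    rwa [smul_mulVec] at h
  rw [div_eq_inv_mul, mul_smul, ← h, smul_smul, inv_mul_cancel₀ ht, one_smul]

/-- Perturbation of a semisimple zero eigenvalue: eigenvalues of `A₀ + t Mₜ` tending to `0` are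
`t σ + o(t)` with `σ` an eigenvalue of the reduced matrix `W M₀ U`. -/
theorem exists_re_neg_of_isEig_add_smul [Fintype κ] [DecidableEq κ] {A₀ M₀ : Matrix ι ι ℂ}
    {U : Matrix ι κ ℂ} {W : Matrix κ ι ℂ} (hWA : W * A₀ = 0) (hWU : W * U = 1)
    (hker : ∀ v, A₀ *ᵥ v = 0 → ∃ c, v = U *ᵥ c) (hA₀ : ∀ μ, IsEig A₀ μ → 0 ≤ μ.re → μ = 0)
    (hN : ∀ σ, IsEig (W * M₀ * U) σ → σ.re < 0) {t : ℕ → ℝ} (htpos : ∀ m, 0 < t m)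
    (ht : Tendsto t atTop (𝓝 0)) {M : ℕ → Matrix ι ι ℂ} (hM : Tendsto M atTop (𝓝 M₀))
    {μ : ℕ → ℂ} {V : ℕ → ι → ℂ} (hV : ∀ m, ‖V m‖ = 1)
    (hAV : ∀ m, (A₀ + (t m : ℂ) • M m) *ᵥ V m = μ m • V m) : ∃ m, (μ m).re < 0 := by
  by_contra! hre
  have htC : Tendsto (fun m => (t m : ℂ)) atTop (𝓝 0) := by
    have h := (Complex.continuous_ofReal.tendsto 0).comp ht
    rwa [Complex.ofReal_zero] at h
  have hA : Tendsto (fun m => A₀ + (t m : ℂ) • M m) atTop (𝓝 A₀) := by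
    simpa using (htC.smul hM).const_add A₀
  obtain ⟨φ, hφ, v₀, μ₀, hv₀, hVφ, hμφ, hAv₀⟩ := exists_subseq_tendsto_eigenpair hA hV hAV
  have hv₀ne : v₀ ≠ 0 := norm_ne_zero_iff.mp (by rw [hv₀]; exact one_ne_zero)
  have hμ₀ : μ₀ = 0 := hA₀ μ₀ ⟨v₀, hv₀ne, hAv₀⟩
    (ge_of_tendsto' ((Complex.continuous_re.tendsto _).comp hμφ) fun m => hre (φ m))
  obtain ⟨c, rfl⟩ := hker v₀ (by rw [hAv₀, hμ₀, zero_smul])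
  have hc : c ≠ 0 := by rintro rfl; exact hv₀ne (mulVec_zero U)
  have hWV : Tendsto (fun m => W *ᵥ V (φ m)) atTop (𝓝 c) := by
    have hW : Continuous fun v : ι → ℂ => W *ᵥ v := by fun_prop
    have h := (hW.tendsto _).comp hVφ
    rwa [mulVec_mulVec, hWU, one_mulVec] at h
  have hWMV : Tendsto (fun m => (W * M (φ m)) *ᵥ V (φ m)) atTop (𝓝 ((W * M₀ * U) *ᵥ c)) := by
    have hWM : Continuous fun p : Matrix ι ι ℂ × (ι → ℂ) => (W * p.1) *ᵥ p.2 := by fun_prop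
    have h := (hWM.tendsto (M₀, U *ᵥ c)).comp ((hM.comp hφ.tendsto_atTop).prodMk_nhds hVφ)
    rwa [mulVec_mulVec] at h
  obtain ⟨σ, hσ, hσc⟩ := exists_tendsto_of_smul_eq hWV hWMV hc fun m =>
    div_smul_mulVec_eq_of_mul_eq_zero hWA (Complex.ofReal_ne_zero.mpr (htpos (φ m)).ne') (hAV (φ m))
  have hσre : 0 ≤ σ.re := by
    refine ge_of_tendsto' ((Complex.continuous_re.tendsto _).comp hσ) fun m => ?_
    simp only [Function.comp_apply, Complex.div_ofReal_re]
    exact div_nonneg (hre (φ m)) (htpos (φ m)).le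
  exact (hN σ ⟨c, hc, hσc.symm⟩).not_ge hσre

theorem eventually_re_neg_of_isEig_add_smul [Fintype κ] [DecidableEq κ] {A₀ M₀ : Matrix ι ι ℂ}
    {U : Matrix ι κ ℂ} {W : Matrix κ ι ℂ} (hWA : W * A₀ = 0) (hWU : W * U = 1)
    (hker : ∀ v, A₀ *ᵥ v = 0 → ∃ c, v = U *ᵥ c) (hA₀ : ∀ μ, IsEig A₀ μ → 0 ≤ μ.re → μ = 0)
    (hN : ∀ σ, IsEig (W * M₀ * U) σ → σ.re < 0) {M : ℝ → Matrix ι ι ℂ}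
    (hM : Tendsto M (𝓝[>] 0) (𝓝 M₀)) :
    ∀ᶠ t : ℝ in 𝓝[>] 0, ∀ μ, IsEig (A₀ + (t : ℂ) • M t) μ → μ.re < 0 := by
  by_contra hcon
  obtain ⟨t, ht, hbad⟩ :=
    exists_seq_forall_of_frequently ((not_eventually.mp hcon).and_eventually self_mem_nhdsWithin)
  have hbad' : ∀ m, ∃ (μ : ℂ) (V : ι → ℂ),
      ‖V‖ = 1 ∧ (A₀ + (t m : ℂ) • M (t m)) *ᵥ V = μ • V ∧ 0 ≤ μ.re := fun m => by
    obtain ⟨μ, hμ, hre⟩ := not_forall₂.mp (hbad m).1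
    obtain ⟨V, hV, hAV⟩ := hμ.exists_norm_eq_one
    exact ⟨μ, V, hV, hAV, not_lt.mp hre⟩
  choose μ V hV hAV hre using hbad'
  obtain ⟨m, hm⟩ := exists_re_neg_of_isEig_add_smul hWA hWU hker hA₀ hN (fun m => (hbad m).2)
    (tendsto_nhds_of_tendsto_nhdsWithin ht) (hM.comp ht) hV hAV
  exact (hre m).not_gt hm

end Perturbation

theorem neg_lt_norm_ofReal_sub {d : ℝ} {μ : ℂ} (hμ : μ ≠ 0) (hre : 0 ≤ μ.re) :
    -d < ‖(d : ℂ) - μ‖ := by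
  rcases lt_or_ge 0 d with hd | hd
  · exact (neg_neg_of_pos hd).trans_le (norm_nonneg _)
  refine lt_of_pow_lt_pow_left₀ 2 (norm_nonneg _) ?_
  have hμ' := Complex.normSq_pos.mpr hμ
  rw [Complex.sq_norm, Complex.normSq_apply]
  rw [Complex.normSq_apply] at hμ'
  simp only [Complex.sub_re, Complex.ofReal_re, Complex.sub_im, Complex.ofReal_im, zero_sub]
  nlinarith

section Metzler

variable {n : ℕ} {R : Matrix (Fin n) (Fin n) ℝ}

/-- The Gershgorin column discs `|z - Rₖₖ| ≤ -Rₖₖ` meet `0 ≤ Re z` only at `0`. -/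
theorem EssNonneg.eq_zero_of_isEig (hess : EssNonneg R) (hcol : ZeroColSums R) {μ : ℂ}
    (hμ : IsEig (R.map (↑)) μ) (hre : 0 ≤ μ.re) : μ = 0 := by
  by_contra hμ0
  obtain ⟨v, hv, hRv⟩ := hμ
  refine det_ne_zero_of_sum_col_lt_diag (A := R.map (↑) - μ • 1) (fun k => ?_)
    (exists_mulVec_eq_zero_iff.mp
      ⟨v, hv, by rw [sub_mulVec, smul_mulVec, one_mulVec, hRv, sub_self]⟩)
  have hoff :
      ∑ i ∈ univ.erase k, ‖(R.map (↑) - μ • 1 : Matrix (Fin n) (Fin n) ℂ) i k‖ = -R k k := by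
    calc _ = ∑ i ∈ univ.erase k, R i k := sum_congr rfl fun i hi => by
            have hik := ne_of_mem_erase hi
            simp [hik, abs_of_nonneg (hess i k hik)]
      _ = -R k k := by linarith [add_sum_erase univ (R · k) (mem_univ k), hcol k]
  rw [hoff]
  simpa using neg_lt_norm_ofReal_sub hμ0 hre

theorem MatIrred.eq_zero_of_nonneg_of_mulVec_eq_zero (hirr : MatIrred R) (hess : EssNonneg R)
    {z : Fin n → ℝ} (hz : 0 ≤ z) (hRz : R *ᵥ z = 0) {j₀ : Fin n} (hj₀ : z j₀ = 0) : z = 0 := by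
  by_contra hne
  set S := univ.filter fun k => z k ≠ 0
  have hS : S.Nonempty := by
    obtain ⟨k, hk⟩ := Function.ne_iff.mp hne
    exact ⟨k, by simpa [S] using hk⟩
  have hSu : S ≠ Finset.univ := fun h => by
    have hj₀S : j₀ ∈ S := h ▸ Finset.mem_univ j₀
    simp [S, hj₀] at hj₀S
  obtain ⟨j, hjS, k, hkS, hjk⟩ := hirr S hS hSu
  simp only [S, Finset.mem_filter, Finset.mem_univ, true_and, not_not] at hjS hkS
  have hjk' : j ≠ k := by rintro rfl; exact hkS hjS
  have hpos : 0 < (R *ᵥ z) j := by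
    refine sum_pos' (fun i _ => ?_)
      ⟨k, Finset.mem_univ k, mul_pos ((hess j k hjk').lt_of_ne' hjk) ((hz k).lt_of_ne' hkS)⟩
    rcases eq_or_ne j i with rfl | hji
    · simp [hjS]
    · exact mul_nonneg (hess j i hji) (hz i)
  simp [hRz] at hpos

theorem MatIrred.exists_eq_smul_of_mulVec_eq_zero (hirr : MatIrred R) (hess : EssNonneg R)
    {ξ : Fin n → ℝ} (hξ : PosVec ξ) (hRξ : R *ᵥ ξ = 0) {u : Fin n → ℝ} (hu : R *ᵥ u = 0) :
    ∃ c : ℝ, u = c • ξ := by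
  rcases isEmpty_or_nonempty (Fin n) with _ | _
  · exact ⟨0, Subsingleton.elim _ _⟩
  obtain ⟨j₀, -, hj₀⟩ := exists_min_image univ (fun j => u j / ξ j) univ_nonempty
  refine ⟨u j₀ / ξ j₀, sub_eq_zero.mp (hirr.eq_zero_of_nonneg_of_mulVec_eq_zero hess
    (z := u - (u j₀ / ξ j₀) • ξ) (fun j => ?_) ?_ (j₀ := j₀) ?_)⟩
  · simpa using (le_div_iff₀ (hξ j)).mp (hj₀ j (mem_univ j))
  · rw [mulVec_sub, mulVec_smul, hu, hRξ, smul_zero, sub_zero]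
  · simp [div_mul_cancel₀ _ (hξ j₀).ne']

theorem MatIrred.exists_eq_smul_of_map_mulVec_eq_zero (hirr : MatIrred R) (hess : EssNonneg R)
    {ξ : Fin n → ℝ} (hξ : PosVec ξ) (hRξ : R *ᵥ ξ = 0) {v : Fin n → ℂ}
    (hv : R.map (↑) *ᵥ v = 0) : ∃ c : ℂ, v = c • fun j => (ξ j : ℂ) := by
  have hre : R *ᵥ (fun j => (v j).re) = 0 := funext fun j => by
    simpa [mulVec, dotProduct, Complex.re_sum] using congrArg Complex.re (congrFun hv j)
  have him : R *ᵥ (fun j => (v j).im) = 0 := funext fun j => by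
    simpa [mulVec, dotProduct, Complex.im_sum] using congrArg Complex.im (congrFun hv j)
  obtain ⟨a, ha⟩ := hirr.exists_eq_smul_of_mulVec_eq_zero hess hξ hRξ hre
  obtain ⟨b, hb⟩ := hirr.exists_eq_smul_of_mulVec_eq_zero hess hξ hRξ him
  refine ⟨⟨a, b⟩, funext fun j => Complex.ext ?_ ?_⟩
  · simpa using congrFun ha j
  · simpa using congrFun hb j

end Metzler

theorem re_neg_of_sq_sub_mul_add_eq_zero {t d : ℝ} (ht : t < 0) (hd : 0 < d) {σ : ℂ}
    (h : σ ^ 2 - t * σ + d = 0) : σ.re < 0 := by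
  have hre := congrArg Complex.re h
  have him := congrArg Complex.im h
  simp only [sq, Complex.add_re, Complex.sub_re, Complex.mul_re, Complex.ofReal_re,
    Complex.ofReal_im, Complex.add_im, Complex.sub_im, Complex.mul_im, Complex.zero_re,
    Complex.zero_im] at hre him
  by_contra! hσ
  have him0 : σ.im = 0 := by
    have h' : σ.im * (2 * σ.re - t) = 0 := by linear_combination him
    exact (mul_eq_zero.mp h').resolve_right (by linarith)
  rw [him0] at hre
  nlinarith

theorem re_neg_of_isEig_fromBlocks {p q r s : ℝ} (htr : p + s < 0) (hdet : 0 < p * s - q * r)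
    {σ : ℂ} (hσ : IsEig (fromBlocks (of fun _ _ => (p : ℂ)) (of fun _ _ => (q : ℂ))
      (of fun _ _ => (r : ℂ)) (of fun _ _ => (s : ℂ)) : Matrix (Unit ⊕ Unit) (Unit ⊕ Unit) ℂ) σ) :
    σ.re < 0 := by
  obtain ⟨c, hc, hσc⟩ := hσ
  have h₁ := congrFun hσc (Sum.inl ())
  have h₂ := congrFun hσc (Sum.inr ())
  simp [mulVec, dotProduct] at h₁ h₂
  refine re_neg_of_sq_sub_mul_add_eq_zero (t := p + s) htr hdet ?_
  push_cast
  by_cases hc₁ : c (Sum.inl ()) = 0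
  · have hc₂ : c (Sum.inr ()) ≠ 0 := fun hc₂ => hc (funext fun | .inl () => hc₁ | .inr () => hc₂)
    refine (mul_eq_zero.mp ?_).resolve_right hc₂
    linear_combination -(r : ℂ) * h₁ - (σ - p) * h₂
  · refine (mul_eq_zero.mp ?_).resolve_right hc₁
    linear_combination -(σ - s) * h₁ - (q : ℂ) * h₂

section Model

variable {n : ℕ}

noncomputable def diffusionMatrix (P Q : Matrix (Fin n) (Fin n) ℝ) (θ : ℝ) :
    Matrix (Fin n ⊕ Fin n) (Fin n ⊕ Fin n) ℂ :=
  fromBlocks (P.map (↑)) 0 0 ((θ : ℂ) • Q.map (↑))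

noncomputable def reactionMatrix (b : Fin n → ℝ) (β : ℝ) (x y : Fin n → ℝ) :
    Matrix (Fin n ⊕ Fin n) (Fin n ⊕ Fin n) ℂ :=
  fromBlocks (diagonal fun j => ((2 * x j * y j - β * b j - 1 : ℝ) : ℂ))
    (diagonal fun j => ((x j ^ 2 : ℝ) : ℂ))
    (diagonal fun j => ((β * b j - 2 * x j * y j : ℝ) : ℂ))
    (-diagonal fun j => ((x j ^ 2 : ℝ) : ℂ))

theorem Amat_eq (P Q : Matrix (Fin n) (Fin n) ℝ) (b : Fin n → ℝ) (θ lam β : ℝ)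
    (x y : Fin n → ℝ) :
    Amat P Q b θ lam β x y = diffusionMatrix P Q θ + (lam : ℂ) • reactionMatrix b β x y :=
  rfl

def blockSums (n : ℕ) : Matrix (Unit ⊕ Unit) (Fin n ⊕ Fin n) ℂ :=
  fromBlocks (replicateRow Unit 1) 0 0 (replicateRow Unit 1)

noncomputable def kernelBasis (ξ η : Fin n → ℝ) : Matrix (Fin n ⊕ Fin n) (Unit ⊕ Unit) ℂ :=
  fromBlocks (replicateCol Unit fun j => (ξ j : ℂ)) 0 0 (replicateCol Unit fun j => (η j : ℂ))

theorem replicateRow_one_mul_map_eq_zero {R : Matrix (Fin n) (Fin n) ℝ} (hcol : ZeroColSums R) :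
    replicateRow Unit (1 : Fin n → ℂ) * R.map ((↑) : ℝ → ℂ) = 0 := by
  ext _ k
  simpa [mul_apply] using congrArg ((↑) : ℝ → ℂ) (hcol k)

theorem blockSums_mul_diffusionMatrix {P Q : Matrix (Fin n) (Fin n) ℝ} (hP : ZeroColSums P)
    (hQ : ZeroColSums Q) (θ : ℝ) : blockSums n * diffusionMatrix P Q θ = 0 := by
  simp [blockSums, diffusionMatrix, fromBlocks_multiply, replicateRow_one_mul_map_eq_zero hP,
    replicateRow_one_mul_map_eq_zero hQ]

theorem blockSums_mul_kernelBasis {ξ η : Fin n → ℝ} (hξ : ∑ j, ξ j = 1) (hη : ∑ j, η j = 1) :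
    blockSums n * kernelBasis ξ η = 1 := by
  rw [← fromBlocks_one]
  simp only [blockSums, kernelBasis, fromBlocks_multiply, replicateRow_mul_replicateCol,
    Matrix.mul_zero, Matrix.zero_mul, add_zero, zero_add]
  congr <;> ext
  · simpa [dotProduct] using congrArg ((↑) : ℝ → ℂ) hξ
  · simpa [dotProduct] using congrArg ((↑) : ℝ → ℂ) hη

theorem diffusionMatrix_mulVec (P Q : Matrix (Fin n) (Fin n) ℝ) (θ : ℝ)
    (v : Fin n ⊕ Fin n → ℂ) :
    diffusionMatrix P Q θ *ᵥ v =
      Sum.elim (P.map (↑) *ᵥ (v ∘ Sum.inl)) ((θ : ℂ) • Q.map (↑) *ᵥ (v ∘ Sum.inr)) := by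
  simp [diffusionMatrix, fromBlocks_mulVec, smul_mulVec]

theorem exists_eq_kernelBasis_mulVec_of_mulVec_eq_zero {P Q : Matrix (Fin n) (Fin n) ℝ} {θ : ℝ}
    (hθ : θ ≠ 0) (hPirr : MatIrred P) (hQirr : MatIrred Q) (hPess : EssNonneg P)
    (hQess : EssNonneg Q) {ξ η : Fin n → ℝ} (hξ : PosVec ξ) (hη : PosVec η) (hPξ : P *ᵥ ξ = 0) (hQη : Q *ᵥ η = 0)
    {v : Fin n ⊕ Fin n → ℂ} (hv : diffusionMatrix P Q θ *ᵥ v = 0) :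
    ∃ c, v = kernelBasis ξ η *ᵥ c := by
  rw [diffusionMatrix_mulVec] at hv
  have h₁ : P.map (↑) *ᵥ (v ∘ Sum.inl) = 0 := funext fun j => by
    simpa using congrFun hv (Sum.inl j)
  have h₂ : Q.map (↑) *ᵥ (v ∘ Sum.inr) = 0 := funext fun j => by
    simpa [hθ] using congrFun hv (Sum.inr j)
  obtain ⟨c₁, hc₁⟩ := hPirr.exists_eq_smul_of_map_mulVec_eq_zero hPess hξ hPξ h₁
  obtain ⟨c₂, hc₂⟩ := hQirr.exists_eq_smul_of_map_mulVec_eq_zero hQess hη hQη h₂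
  refine ⟨Sum.elim (fun _ => c₁) (fun _ => c₂), funext fun | .inl j => ?_ | .inr j => ?_⟩
  · simpa [kernelBasis, fromBlocks_mulVec, mulVec, dotProduct, mul_comm] using congrFun hc₁ j
  · simpa [kernelBasis, fromBlocks_mulVec, mulVec, dotProduct, mul_comm] using congrFun hc₂ j

theorem eq_zero_of_isEig_diffusionMatrix {P Q : Matrix (Fin n) (Fin n) ℝ} {θ : ℝ} (hθ : 0 < θ)
    (hPess : EssNonneg P) (hQess : EssNonneg Q) (hPcol : ZeroColSums P) (hQcol : ZeroColSums Q)
    {μ : ℂ} (hμ : IsEig (diffusionMatrix P Q θ) μ) (hre : 0 ≤ μ.re) : μ = 0 := by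
  obtain ⟨v, hv, hAv⟩ := hμ
  rw [diffusionMatrix_mulVec] at hAv
  by_cases h₁ : v ∘ Sum.inl = 0
  · have h₂ : v ∘ Sum.inr ≠ 0 := fun h₂ =>
      hv (funext fun | .inl j => congrFun h₁ j | .inr j => congrFun h₂ j)
    have hθ' : (θ : ℂ) ≠ 0 := Complex.ofReal_ne_zero.mpr hθ.ne'
    have hQ : Q.map (↑) *ᵥ (v ∘ Sum.inr) = (μ / θ) • (v ∘ Sum.inr) := funext fun j => by
      have h := congrFun hAv (Sum.inr j)
      simp only [Sum.elim_inr, Pi.smul_apply, smul_eq_mul] at h ⊢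
      rw [div_mul_eq_mul_div, eq_div_iff hθ', Function.comp_apply, ← h, mul_comm]
    have hre' : 0 ≤ (μ / θ).re := by
      rw [Complex.div_ofReal_re]
      exact div_nonneg hre hθ.le
    simpa [hθ'] using hQess.eq_zero_of_isEig hQcol ⟨_, h₂, hQ⟩ hre'
  · exact hPess.eq_zero_of_isEig hPcol
      ⟨v ∘ Sum.inl, h₁, funext fun j => by simpa using congrFun hAv (Sum.inl j)⟩ hre

theorem continuous_reactionMatrix (b : Fin n → ℝ) (β : ℝ) :
    Continuous fun p : (Fin n → ℝ) × (Fin n → ℝ) => reactionMatrix b β p.1 p.2 := by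
  unfold reactionMatrix
  fun_prop

theorem blockSums_mul_reactionMatrix_mul_kernelBasis (b : Fin n → ℝ) (β : ℝ)
    (x y ξ η : Fin n → ℝ) :
    blockSums n * reactionMatrix b β x y * kernelBasis ξ η =
      fromBlocks (of fun _ _ => ((∑ j, (2 * x j * y j - β * b j - 1) * ξ j : ℝ) : ℂ))
        (of fun _ _ => ((∑ j, x j ^ 2 * η j : ℝ) : ℂ))
        (of fun _ _ => ((∑ j, (β * b j - 2 * x j * y j) * ξ j : ℝ) : ℂ))
        (of fun _ _ => ((-∑ j, x j ^ 2 * η j : ℝ) : ℂ)) := by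
  ext (_ | _) (_ | _) <;>
    simp [blockSums, reactionMatrix, kernelBasis, fromBlocks_multiply, mul_apply, diagonal_apply]

end Model

theorem re_neg_of_isEig_reduced_equilibrium {n : ℕ} {b ξ η : Fin n → ℝ} {c₀ β : ℝ}
    (hc₀ : c₀ ≠ 0) (hS : 0 < ∑ j, ξ j ^ 2 * η j) (hξ : ∑ j, ξ j = 1)
    (hsmall : β * (∑ j, b j * ξ j) < 1 + c₀ ^ 2 * (∑ j, ξ j ^ 2 * η j)) {σ : ℂ}
    (hσ : IsEig (blockSums n * reactionMatrix b β (fun j => c₀ * ξ j)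
      (fun j => β * (∑ i, b i * ξ i) / (c₀ * (∑ i, ξ i ^ 2 * η i)) * η j) * kernelBasis ξ η) σ) :
    σ.re < 0 := by
  set B := ∑ j, b j * ξ j
  set S := ∑ j, ξ j ^ 2 * η j
  have hr : c₀ * (β * B / (c₀ * S)) * S = β * B := by field_simp
  have h₁₁ : ∑ j, (2 * (c₀ * ξ j) * (β * B / (c₀ * S) * η j) - β * b j - 1) * ξ j = β * B - 1 := by
    calc _ = ∑ j, (2 * (c₀ * (β * B / (c₀ * S))) * (ξ j ^ 2 * η j) - β * (b j * ξ j) - ξ j) :=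
          sum_congr rfl fun j _ => by ring
      _ = β * B - 1 := by
          rw [sum_sub_distrib, sum_sub_distrib, ← mul_sum, ← mul_sum, hξ]
          linear_combination 2 * hr
  have h₁₂ : ∑ j, (c₀ * ξ j) ^ 2 * η j = c₀ ^ 2 * S := by
    rw [mul_sum]
    exact sum_congr rfl fun j _ => by ring
  have h₂₁ : ∑ j, (β * b j - 2 * (c₀ * ξ j) * (β * B / (c₀ * S) * η j)) * ξ j = -(β * B) := by
    calc _ = ∑ j, (β * (b j * ξ j) - 2 * (c₀ * (β * B / (c₀ * S))) * (ξ j ^ 2 * η j)) :=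
          sum_congr rfl fun j _ => by ring
      _ = -(β * B) := by
          rw [sum_sub_distrib, ← mul_sum, ← mul_sum]
          linear_combination -2 * hr
  rw [blockSums_mul_reactionMatrix_mul_kernelBasis, h₁₁, h₁₂, h₂₁] at hσ
  have hD : 0 < c₀ ^ 2 * S := by positivity
  exact re_neg_of_isEig_fromBlocks (by linarith) (by nlinarith) hσ

theorem stmt_4_general (n : ℕ)
    (P Q : Matrix (Fin n) (Fin n) ℝ) (a b ξ η : Fin n → ℝ) (θ : ℝ)
    (ha : ∀ j, 0 < a j) (hθ : 0 < θ)
    (hPirr : MatIrred P) (hQirr : MatIrred Q)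
    (hPess : EssNonneg P) (hQess : EssNonneg Q)
    (hPcol : ZeroColSums P) (hQcol : ZeroColSums Q)
    (hξpos : PosVec ξ) (hηpos : PosVec η)
    (hPξ : P.mulVec ξ = 0) (hQη : Q.mulVec η = 0)
    (hξsum : ∑ j, ξ j = 1) (hηsum : ∑ j, η j = 1)
    (ε : ℝ) (hε : ε ∈ Set.Ioo (0 : ℝ) 1)
    -- the globally defined equilibrium family on `[0, δε] × B`
    (δε : ℝ) (hδε : 0 < δε)
    (xy : ℝ → ℝ → (Fin n → ℝ) × (Fin n → ℝ))
    (hxyC1 : ContDiffOn ℝ 1 (fun p : ℝ × ℝ => xy p.1 p.2)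
      (Set.Icc 0 δε ×ˢ Set.Icc ε (1 / ε)))
    (hxy0 : ∀ β ∈ Set.Icc ε (1 / ε),
      xy 0 β = ((fun j => (∑ i, a i) * ξ j),
        (fun j => β * (∑ i, b i * ξ i) /
          ((∑ i, a i) * (∑ i, (ξ i) ^ 2 * η i)) * η j)))
    -- the smallness condition on `ε`
    (hsmall : ε * (∑ j, b j * ξ j) < 1 + (∑ j, a j) ^ 2 * (∑ j, (ξ j) ^ 2 * η j)) :
    ∃ lam' ∈ Set.Ioc 0 δε, ∀ lam ∈ Set.Ioc 0 lam', ∀ μ : ℂ,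
      IsEig (Amat P Q b θ lam ε (xy lam ε).1 (xy lam ε).2) μ → μ.re < 0 := by
  have : Nonempty (Fin n) := by
    by_contra h
    simp [not_nonempty_iff.mp h] at hξsum
  obtain ⟨hε₀, hε₁⟩ := hε
  have hεB : ε ∈ Set.Icc ε (1 / ε) := ⟨le_rfl, by rw [le_div_iff₀ hε₀]; nlinarith⟩
  have hpath : Tendsto (fun t : ℝ => (t, ε)) (𝓝[>] 0)
      (𝓝[Set.Icc 0 δε ×ˢ Set.Icc ε (1 / ε)] (0, ε)) := by
    refine tendsto_nhdsWithin_iff.mpr ⟨?_, ?_⟩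
    · exact ((continuous_id.prodMk continuous_const).tendsto' 0 (0, ε) rfl).mono_left
        nhdsWithin_le_nhds
    · filter_upwards [Ioo_mem_nhdsGT hδε] with t ht using ⟨Set.Ioo_subset_Icc_self ht, hεB⟩
  have hxy : Tendsto (fun t => xy t ε) (𝓝[>] 0) (𝓝 (xy 0 ε)) :=
    (hxyC1.continuousOn (0, ε) ⟨⟨le_rfl, hδε.le⟩, hεB⟩).tendsto.comp hpath
  rw [hxy0 ε hεB] at hxy
  have hM := ((continuous_reactionMatrix b ε).tendsto _).comp hxy
  have hev := eventually_re_neg_of_isEig_add_smul (blockSums_mul_diffusionMatrix hPcol hQcol θ)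
    (blockSums_mul_kernelBasis hξsum hηsum)
    (fun _ => exists_eq_kernelBasis_mulVec_of_mulVec_eq_zero hθ.ne' hPirr hQirr hPess hQess
      hξpos hηpos hPξ hQη)
    (fun _ => eq_zero_of_isEig_diffusionMatrix hθ hPess hQess hPcol hQcol)
    (fun _ => re_neg_of_isEig_reduced_equilibrium (sum_pos (fun j _ => ha j) univ_nonempty).ne'
      (sum_pos (fun j _ => mul_pos (pow_pos (hξpos j) 2) (hηpos j)) univ_nonempty) hξsum hsmall) hM
  obtain ⟨l, hl, hsub⟩ := mem_nhdsGT_iff_exists_Ioc_subset.mp hev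
  refine ⟨min l δε, ⟨lt_min hl hδε, min_le_right _ _⟩, fun t ht => ?_⟩
  simpa only [Amat_eq, Set.mem_ofPred_eq, Function.comp_apply] using
    hsub ⟨ht.1, ht.2.trans (min_le_left _ _)⟩

/-- If `ε (∑ bⱼξⱼ) < 1 + (∑ aⱼ)² (∑ ξⱼ²ηⱼ)`, then for all sufficiently small
`λ > 0` every eigenvalue of `A_ε(λ)` has strictly negative real part. -/
theorem stmt_4 (n : ℕ) (hn : 2 ≤ n)
    (P Q : Matrix (Fin n) (Fin n) ℝ) (a b ξ η : Fin n → ℝ) (θ : ℝ)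
    (ha : ∀ j, 0 < a j) (hb : ∀ j, 0 < b j) (hθ : 0 < θ)
    (hPirr : MatIrred P) (hQirr : MatIrred Q)
    (hPess : EssNonneg P) (hQess : EssNonneg Q)
    (hPcol : ZeroColSums P) (hQcol : ZeroColSums Q)
    (hξpos : PosVec ξ) (hηpos : PosVec η)
    (hPξ : P.mulVec ξ = 0) (hQη : Q.mulVec η = 0)
    (hξsum : ∑ j, ξ j = 1) (hηsum : ∑ j, η j = 1)
    (ε : ℝ) (hε : ε ∈ Set.Ioo (0 : ℝ) 1)
    -- the globally defined equilibrium family on `[0, δε] × B`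
    (δε : ℝ) (hδε : 0 < δε)
    (xy : ℝ → ℝ → (Fin n → ℝ) × (Fin n → ℝ))
    (hxyC1 : ContDiffOn ℝ 1 (fun p : ℝ × ℝ => xy p.1 p.2)
      (Set.Icc 0 δε ×ˢ Set.Icc ε (1 / ε)))
    (hxy : ∀ lam ∈ Set.Ioc 0 δε, ∀ β ∈ Set.Icc ε (1 / ε),
      PosVec (xy lam β).1 ∧ PosVec (xy lam β).2 ∧
      IsEquilib P Q a b θ lam β (xy lam β).1 (xy lam β).2 ∧
      (∀ x y : Fin n → ℝ, PosVec x → PosVec y →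
        IsEquilib P Q a b θ lam β x y → (x, y) = xy lam β))
    (hxy0 : ∀ β ∈ Set.Icc ε (1 / ε),
      xy 0 β = ((fun j => (∑ i, a i) * ξ j),
        (fun j => β * (∑ i, b i * ξ i) /
          ((∑ i, a i) * (∑ i, (ξ i) ^ 2 * η i)) * η j)))
    -- the smallness condition on `ε`
    (hsmall : ε * (∑ j, b j * ξ j) < 1 + (∑ j, a j) ^ 2 * (∑ j, (ξ j) ^ 2 * η j)) :
    ∃ lam' ∈ Set.Ioc 0 δε, ∀ lam ∈ Set.Ioc 0 lam', ∀ μ : ℂ,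
      IsEig (Amat P Q b θ lam ε (xy lam ε).1 (xy lam ε).2) μ → μ.re < 0 :=
  stmt_4_general n P Q a b ξ η θ ha hθ hPirr hQirr hPess hQess hPcol hQcol hξpos hηpos hPξ hQη hξsum
    hηsum ε hε δε hδε xy hxyC1 hxy0 hsmall
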